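/- Let X be a streak in which subtraction is total, i.e., for all a, b ∈ X there exists x ∈ X with a + x = b. Then there exists a unique total multiplication on X extending the given multiplication on positive elements which makes X into a ring streak (a commutative unital ring whose multiplication satisfies the multiplicity condition: b < a and d < c imply a·d + b·c < a·c + b·d). -/

import Mathlib

/-- A prestreak: a strict order (asymmetric and cotransitive) together with a
commutative additive monoid structure and a commutative multiplicative monoid
structure on the positive part, compatible with the order.  (The intrinsic
topology conditions of the paper are omitted, being vacuous in the classical
set-theoretic setting.) -/
structure Prestreak (X : Type*) where
  lt : X → X → Prop
  add : X → X → X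
  zero : X
  mul : X → X → X
  one : X
  lt_asymm : ∀ a b, ¬ (lt a b ∧ lt b a)
  lt_cotrans : ∀ a b x, lt a b → lt a x ∨ lt x b
  add_comm : ∀ a b, add a b = add b a
  add_assoc : ∀ a b c, add (add a b) c = add a (add b c)
  add_zero : ∀ a, add a zero = a
  zero_lt_one : lt zero one
  mul_pos : ∀ a b, lt zero a → lt zero b → lt zero (mul a b)
  mul_comm : ∀ a b, lt zero a → lt zero b → mul a b = mul b a
  mul_assoc : ∀ a b c, lt zero a → lt zero b → lt zero c →
    mul (mul a b) c = mul a (mul b c)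
  mul_one : ∀ a, lt zero a → mul a one = a
  mul_add : ∀ a b c, lt zero a → lt zero b → lt zero c →
    mul (add a b) c = add (mul a c) (mul b c)
  add_lt_add_iff : ∀ a b x, (lt (add a x) (add b x) ↔ lt a b)
  mul_lt_mul_iff : ∀ a b x, lt zero a → lt zero b → lt zero x →
    (lt (mul a x) (mul b x) ↔ lt a b)

namespace Prestreak

variable {X : Type*}

/-- Multiplication by a natural number: `0·a = 0`, `(n+1)·a = n·a + a`. -/
def nsmul (P : Prestreak X) : ℕ → X → X
  | 0, _ => P.zero
  | n + 1, a => P.add (nsmul P n a) a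

/-- The canonical image of a natural number, `n ↦ n·1`. -/
def ofNat (P : Prestreak X) (n : ℕ) : X := P.nsmul n P.one

/-- Comparison `x < q` of an element of a prestreak with a rational number,
using the canonical representation `q = (q.num⁺ − q.num⁻)/q.den`:
`x < (a−b)/c  :=  c·x + b < a`. -/
def ltQ (P : Prestreak X) (x : X) (q : ℚ) : Prop :=
  P.lt (P.add (P.nsmul q.den x) (P.ofNat ((-q.num).toNat))) (P.ofNat q.num.toNat)

/-- Comparison `q < x` of a rational with an element of a prestreak:
`(a−b)/c < x  :=  a < c·x + b`. -/
def qLt (P : Prestreak X) (q : ℚ) (x : X) : Prop :=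
  P.lt (P.ofNat q.num.toNat) (P.add (P.nsmul q.den x) (P.ofNat ((-q.num).toNat)))

/-- The archimedean property for prestreaks. -/
def Archimedean (P : Prestreak X) : Prop :=
  ∀ a b c d : X, P.lt b d →
    ∃ n : ℕ, P.lt (P.add a (P.nsmul n b)) (P.add c (P.nsmul n d))

/-- Tightness: antisymmetry of `≤` (where `a ≤ b := ¬ b < a`).
A streak is a tight archimedean prestreak. -/
def Tight (P : Prestreak X) : Prop :=
  ∀ a b : X, ¬ P.lt a b → ¬ P.lt b a → a = b

/-- The apartness relation `a # b := a < b ∨ b < a`. -/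
def Apart (P : Prestreak X) (a b : X) : Prop := P.lt a b ∨ P.lt b a

/-- A morphism of prestreaks: preserves `<`, `+`, `0`, `1` and products of
positive elements. -/
def IsHom {Y : Type*} (P : Prestreak X) (Q : Prestreak Y) (f : X → Y) : Prop :=
  (∀ a b, P.lt a b → Q.lt (f a) (f b)) ∧
  (∀ a b, f (P.add a b) = Q.add (f a) (f b)) ∧
  f P.zero = Q.zero ∧ f P.one = Q.one ∧
  (∀ a b, P.lt P.zero a → P.lt P.zero b → f (P.mul a b) = Q.mul (f a) (f b))

/-- A multiplicative structure on a prestreak: a total multiplication which is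
commutative, associative, distributes over addition, has unit `1`, restricts to
the given multiplication on positive elements, and satisfies the multiplicity
condition. -/
def IsMultiplicative (P : Prestreak X) (tmul : X → X → X) : Prop :=
  (∀ a b, tmul a b = tmul b a) ∧
  (∀ a b c, tmul (tmul a b) c = tmul a (tmul b c)) ∧
  (∀ a b c, tmul (P.add a b) c = P.add (tmul a c) (tmul b c)) ∧
  (∀ a, tmul a P.one = a) ∧
  (∀ a b, P.lt P.zero a → P.lt P.zero b → tmul a b = P.mul a b) ∧
  (∀ a b c d, P.lt b a → P.lt d c →
    P.lt (P.add (tmul a d) (tmul b c)) (P.add (tmul a c) (tmul b d)))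

end Prestreak

/-!
Total subtraction makes `(X, +, 0)` an abelian group, and the archimedean property writes
every element as a difference `p - q` of positive elements. A map that is additive on the
positive cone therefore extends uniquely to an additive map on `X` (the extension of `f` sends
`p - q` to `f p - f q`); applying this in each variable extends the multiplication of positive
elements uniquely to a biadditive one. Each ring law is an identity between additive maps in
each variable that holds on positive elements, hence holds everywhere, and the multiplicity
condition says that `(a - b) (c - d)` is positive.
-/

section PositiveCone

variable {G H : Type*} [AddCommGroup G] [AddCommGroup H] {S : Set G}

theorem eq_of_map_add_of_eqOn (hS : ∀ g, ∃ p ∈ S, ∃ q ∈ S, g = p - q) {f f' : G → H}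
    (hf : ∀ x y, f (x + y) = f x + f y) (hf' : ∀ x y, f' (x + y) = f' x + f' y)
    (h : Set.EqOn f f' S) : f = f' := by
  funext g
  obtain ⟨p, hp, q, hq, rfl⟩ := hS g
  calc f (p - q) = f p - f q := map_sub (AddMonoidHom.mk' f hf) p q
    _ = f' p - f' q := by rw [h hp, h hq]
    _ = f' (p - q) := (map_sub (AddMonoidHom.mk' f' hf') p q).symm

theorem eq_of_map_add₂_of_eqOn (hS : ∀ g, ∃ p ∈ S, ∃ q ∈ S, g = p - q) {t t' : G → G → H}
    (ht : ∀ a b c, t (a + b) c = t a c + t b c)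
    (ht' : ∀ a b c, t' (a + b) c = t' a c + t' b c)
    (hts : ∀ a b c, t a (b + c) = t a b + t a c)
    (hts' : ∀ a b c, t' a (b + c) = t' a b + t' a c)
    (h : ∀ a ∈ S, ∀ b ∈ S, t a b = t' a b) : t = t' := by
  have hpos : ∀ a ∈ S, t a = t' a := fun a ha =>
    eq_of_map_add_of_eqOn hS (hts a) (hts' a) (h a ha)
  funext a b
  exact congrFun (eq_of_map_add_of_eqOn hS (f := fun a => t a b) (f' := fun a => t' a b)
    (fun x y => ht x y b) (fun x y => ht' x y b) fun a ha => congrFun (hpos a ha) b) a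

theorem exists_addMonoidHom_eqOn (hS : ∀ g, ∃ p ∈ S, ∃ q ∈ S, g = p - q)
    (hS_add : ∀ p ∈ S, ∀ q ∈ S, p + q ∈ S) {f : G → H}
    (hf : ∀ p ∈ S, ∀ q ∈ S, f (p + q) = f p + f q) : ∃ F : G →+ H, Set.EqOn F f S := by
  choose pos hpos neg hneg hpn using hS
  have hdiff : ∀ {p q p' q'}, p ∈ S → q ∈ S → p' ∈ S → q' ∈ S → p - q = p' - q' →
      f p - f q = f p' - f q' := by
    intro p q p' q' hp hq hp' hq' h
    rw [sub_eq_sub_iff_add_eq_add] at h ⊢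
    rw [← hf p hp q' hq', ← hf p' hp' q hq, h]
  refine ⟨AddMonoidHom.mk' (fun g => f (pos g) - f (neg g)) fun x y => ?_, fun p hp => ?_⟩
  · rw [hdiff (hpos _) (hneg _) (hS_add _ (hpos x) _ (hpos y)) (hS_add _ (hneg x) _ (hneg y))
      (by rw [← hpn, ← sub_add_sub_comm, ← hpn x, ← hpn y]), hf _ (hpos x) _ (hpos y),
      hf _ (hneg x) _ (hneg y)]
    abel
  · change f (pos p) - f (neg p) = f p
    rw [hdiff (hpos p) (hneg p) (hS_add _ hp _ (hneg p)) (hneg p) (by rw [← hpn p]; abel),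
      hf _ hp _ (hneg p), add_sub_cancel_right]

theorem exists_addMonoidHom₂_eqOn (hS : ∀ g, ∃ p ∈ S, ∃ q ∈ S, g = p - q)
    (hS_add : ∀ p ∈ S, ∀ q ∈ S, p + q ∈ S) {μ : G → G → H}
    (hμ : ∀ a ∈ S, ∀ b ∈ S, ∀ c ∈ S, μ (a + b) c = μ a c + μ b c)
    (hμ' : ∀ a ∈ S, ∀ b ∈ S, ∀ c ∈ S, μ a (b + c) = μ a b + μ a c) :
    ∃ M : G →+ G →+ H, ∀ a ∈ S, ∀ b ∈ S, M a b = μ a b := by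
  classical
  choose R hR using fun a (ha : a ∈ S) => exists_addMonoidHom_eqOn hS hS_add (hμ' a ha)
  obtain ⟨M, hM⟩ := exists_addMonoidHom_eqOn hS hS_add
    (f := fun a => if ha : a ∈ S then R a ha else 0) fun a ha b hb => by
      simp only [dif_pos ha, dif_pos hb, dif_pos (hS_add a ha b hb)]
      refine DFunLike.coe_injective (eq_of_map_add_of_eqOn hS (map_add _) (map_add _) ?_)
      intro c hc
      simp only [AddMonoidHom.add_apply, hR _ _ hc, hμ a ha b hb c hc]
  refine ⟨M, fun a ha b hb => ?_⟩
  simp only [hM ha, dif_pos ha, hR a ha hb]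

theorem AddMonoidHom.assoc_of_eqOn (hS : ∀ g, ∃ p ∈ S, ∃ q ∈ S, g = p - q) {μ : G → G → G}
    {M : G →+ G →+ G} (hM : ∀ a ∈ S, ∀ b ∈ S, M a b = μ a b)
    (hμS : ∀ a ∈ S, ∀ b ∈ S, μ a b ∈ S)
    (hμ : ∀ a ∈ S, ∀ b ∈ S, ∀ c ∈ S, μ (μ a b) c = μ a (μ b c)) (a b c : G) :
    M (M a b) c = M a (M b c) := by
  have h₁ : ∀ a ∈ S, ∀ b ∈ S, ∀ c ∈ S, M (M a b) c = M a (M b c) := by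
    intro a ha b hb c hc
    rw [hM a ha b hb, hM _ (hμS a ha b hb) c hc, hM b hb c hc, hM a ha _ (hμS b hb c hc),
      hμ a ha b hb c hc]
  have h₂ : ∀ a ∈ S, ∀ b ∈ S, ∀ c, M (M a b) c = M a (M b c) := fun a ha b hb =>
    congrFun (eq_of_map_add_of_eqOn hS (f := fun c => M (M a b) c)
      (f' := fun c => M a (M b c)) (by simp) (by simp) (h₁ a ha b hb))
  have h₃ : ∀ a ∈ S, ∀ b c, M (M a b) c = M a (M b c) := fun a ha b c =>
    congrFun (eq_of_map_add_of_eqOn hS (f := fun b => M (M a b) c)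
      (f' := fun b => M a (M b c)) (by simp) (by simp) fun b hb => h₂ a ha b hb c) b
  exact congrFun (eq_of_map_add_of_eqOn hS (f := fun a => M (M a b) c)
    (f' := fun a => M a (M b c)) (by simp) (by simp) fun a ha => h₃ a ha b c) a

theorem AddMonoidHom.comm_of_eqOn (hS : ∀ g, ∃ p ∈ S, ∃ q ∈ S, g = p - q) {μ : G → G → H}
    {M : G →+ G →+ H} (hM : ∀ a ∈ S, ∀ b ∈ S, M a b = μ a b)
    (hμ : ∀ a ∈ S, ∀ b ∈ S, μ a b = μ b a) (a b : G) : M a b = M b a :=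
  congrFun (congrFun (eq_of_map_add₂_of_eqOn hS (t := fun a b => M a b)
    (t' := fun a b => M b a) (by simp) (by simp) (by simp) (by simp) fun a ha b hb => by
      rw [hM a ha b hb, hM b hb a ha, hμ a ha b hb]) a) b

theorem AddMonoidHom.apply_eq_self_of_eqOn (hS : ∀ g, ∃ p ∈ S, ∃ q ∈ S, g = p - q)
    {μ : G → G → G} {M : G →+ G →+ G} (hM : ∀ a ∈ S, ∀ b ∈ S, M a b = μ a b) {u : G}
    (hu : u ∈ S) (hμ : ∀ a ∈ S, μ a u = a) (a : G) : M a u = a :=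
  congrFun (eq_of_map_add_of_eqOn hS (f := fun a => M a u) (f' := fun a => a) (by simp)
    (fun _ _ => rfl) fun a ha => (hM a ha u hu).trans (hμ a ha)) a

theorem AddMonoidHom.eq_of_comm_of_eqOn (hS : ∀ g, ∃ p ∈ S, ∃ q ∈ S, g = p - q)
    {M : G →+ G →+ H} {t : G → G → H} (ht : ∀ a b, t a b = t b a)
    (ht_add : ∀ a b c, t (a + b) c = t a c + t b c) (h : ∀ a ∈ S, ∀ b ∈ S, t a b = M a b) :
    t = fun a b => M a b :=
  eq_of_map_add₂_of_eqOn hS ht_add (by simp) (fun a b c => by rw [ht, ht_add, ht b, ht c])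
    (by simp) h

end PositiveCone

namespace Prestreak

variable {X : Type*} (P : Prestreak X)

theorem lt_trans {a b c : X} (hab : P.lt a b) (hbc : P.lt b c) : P.lt a c :=
  (P.lt_cotrans a b c hab).resolve_right fun hcb => P.lt_asymm b c ⟨hbc, hcb⟩

theorem lt_add_iff_pos {a x : X} : P.lt a (P.add a x) ↔ P.lt P.zero x := by
  rw [P.add_comm a x, ← P.add_lt_add_iff P.zero x a, P.add_comm P.zero a, P.add_zero]

theorem add_pos {a b : X} (ha : P.lt P.zero a) (hb : P.lt P.zero b) :
    P.lt P.zero (P.add a b) :=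
  P.lt_trans ha ((P.lt_add_iff_pos).2 hb)

theorem left_distrib {a b c : X} (ha : P.lt P.zero a) (hb : P.lt P.zero b)
    (hc : P.lt P.zero c) : P.mul a (P.add b c) = P.add (P.mul a b) (P.mul a c) := by
  rw [P.mul_comm a _ ha (P.add_pos hb hc), P.mul_add b c a hb hc ha, P.mul_comm b a hb ha,
    P.mul_comm c a hc ha]

theorem nsmul_zero (n : ℕ) : P.nsmul n P.zero = P.zero := by
  induction n with
  | zero => rfl
  | succ n ih => exact (congrArg (P.add · P.zero) ih).trans (P.add_zero _)

theorem ofNat_succ_pos (n : ℕ) : P.lt P.zero (P.ofNat (n + 1)) := by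
  induction n with
  | zero =>
    change P.lt P.zero (P.add P.zero P.one)
    rw [P.add_comm, P.add_zero]
    exact P.zero_lt_one
  | succ n ih => exact P.add_pos ih P.zero_lt_one

theorem exists_add_pos_eq_pos (hA : P.Archimedean) (a : X) :
    ∃ p q, P.lt P.zero p ∧ P.lt P.zero q ∧ P.add a q = p := by
  obtain ⟨n, hn⟩ := hA P.zero P.zero a P.one P.zero_lt_one
  rw [P.nsmul_zero, P.add_zero] at hn
  refine ⟨P.add a (P.ofNat (n + 1)), P.ofNat (n + 1), ?_, P.ofNat_succ_pos n, rfl⟩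
  refine P.lt_trans hn ?_
  change P.lt _ (P.add a (P.add (P.ofNat n) P.one))
  rw [← P.add_assoc]
  exact P.lt_add_iff_pos.2 P.zero_lt_one

noncomputable abbrev toAddCommGroup (hsub : ∀ a b : X, ∃ x : X, P.add a x = b) :
    AddCommGroup X :=
  letI : Add X := ⟨P.add⟩
  letI : Zero X := ⟨P.zero⟩
  letI : Neg X := ⟨fun a => (hsub a P.zero).choose⟩
  { AddGroup.ofLeftAxioms P.add_assoc (fun a => (P.add_comm _ _).trans (P.add_zero a))
      fun a => (P.add_comm _ _).trans (hsub a P.zero).choose_spec with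
    add_comm := P.add_comm }

theorem mul_add_mul_lt_mul_add_mul_of_map_add (hsub : ∀ a b : X, ∃ x : X, P.add a x = b)
    {t : X → X → X}
    (ht : ∀ a b c, t (P.add a b) c = P.add (t a c) (t b c))
    (ht' : ∀ a b c, t a (P.add b c) = P.add (t a b) (t a c))
    (hpos : ∀ a b, P.lt P.zero a → P.lt P.zero b → P.lt P.zero (t a b)) {a b c d : X}
    (hba : P.lt b a) (hdc : P.lt d c) :
    P.lt (P.add (t a d) (t b c)) (P.add (t a c) (t b d)) := by
  let _ := P.toAddCommGroup hsub
  obtain ⟨e, rfl⟩ := hsub b a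
  obtain ⟨f, rfl⟩ := hsub d c
  have ht_add : ∀ a b c, t (a + b) c = t a c + t b c := ht
  have ht_add' : ∀ a b c, t a (b + c) = t a b + t a c := ht'
  change P.lt (t (b + e) d + t b (d + f)) (t (b + e) (d + f) + t b d)
  rw [show t (b + e) (d + f) + t b d = t (b + e) d + t b (d + f) + t e f by
    simp only [ht_add, ht_add']; abel]
  exact P.lt_add_iff_pos.2 (hpos e f (P.lt_add_iff_pos.1 hba) (P.lt_add_iff_pos.1 hdc))

end Prestreak

theorem streak_with_total_subtraction_is_ring_general {X : Type*} (P : Prestreak X)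
    (hA : P.Archimedean)
    (hsub : ∀ a b : X, ∃ x : X, P.add a x = b) :
    ∃! tmul : X → X → X, P.IsMultiplicative tmul := by
  let _ := P.toAddCommGroup hsub
  have hS : ∀ a, ∃ p ∈ {x | P.lt P.zero x}, ∃ q ∈ {x | P.lt P.zero x}, a = p - q := fun a =>
    let ⟨p, q, hp, hq, h⟩ := P.exists_add_pos_eq_pos hA a
    ⟨p, hp, q, hq, eq_sub_of_add_eq h⟩
  obtain ⟨M, hM⟩ := exists_addMonoidHom₂_eqOn hS (fun _ hp _ hq => P.add_pos hp hq)
    (fun a ha b hb c hc => P.mul_add a b c ha hb hc)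
    (fun _ ha _ hb _ hc => P.left_distrib ha hb hc)
  have hM_add : ∀ a b c, M (a + b) c = M a c + M b c := fun a b c =>
    DFunLike.congr_fun (map_add M a b) c
  refine ⟨fun a b => M a b, ⟨M.comm_of_eqOn hS hM fun a ha b hb => P.mul_comm a b ha hb,
    M.assoc_of_eqOn hS hM (fun a ha b hb => P.mul_pos a b ha hb)
      fun a ha b hb c hc => P.mul_assoc a b c ha hb hc,
    hM_add, M.apply_eq_self_of_eqOn hS hM P.zero_lt_one fun a ha => P.mul_one a ha,
    fun a b ha hb => hM a ha b hb,
    fun _ _ _ _ => P.mul_add_mul_lt_mul_add_mul_of_map_add hsub hM_add (fun a => map_add (M a))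
      fun a b ha hb => by rw [hM a ha b hb]; exact P.mul_pos a b ha hb⟩, ?_⟩
  rintro t ⟨htcomm, -, htadd, -, htmul, -⟩
  exact M.eq_of_comm_of_eqOn hS htcomm htadd fun a ha b hb =>
    (htmul a b ha hb).trans (hM a ha b hb).symm

/-- A streak with total subtraction carries a unique total multiplication
extending the one on positive elements and making it a ring streak (the
additive structure is already a commutative group by hypothesis, and
`IsMultiplicative` expresses commutativity, associativity, distributivity,
unitality, the extension property and the multiplicity condition). -/
theorem streak_with_total_subtraction_is_ring {X : Type*} (P : Prestreak X)
    (hA : P.Archimedean) (hT : P.Tight)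
    (hsub : ∀ a b : X, ∃ x : X, P.add a x = b) :
    ∃! tmul : X → X → X, P.IsMultiplicative tmul :=
  streak_with_total_subtraction_is_ring_general P hA hsub
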